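/- Let λ ∈ Λ⁰ = { λ ∈ ℤ₊^{k+1} : λ₁ > λ₂ > ... > λ_k > 0, λ_{k+1} = 0 }. Then there exist exactly k+2 pairs (σ,ν) with σ = (n₁,...,n_k) satisfying n₁ ≥ ... ≥ n_{k-1} ≥ |n_k|, all n_i ∈ ℤ, and ν ≥ 0, such that (n₁+k-1, ..., n_{k-1}+1, n_k, ν) lies in the orbit of λ under permutations combined with an even number of sign changes; these are ν_j = λ_j with σ_j (deleting λ_j, appending 0) for 1 ≤ j ≤ k, and ν = 0 with n_k = ±λ_k for the remaining two. -/
import Mathlib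


/-- μ lies in the orbit of λ under the type D Weyl group: permutations of the
coordinates combined with an even number of sign changes. -/
def evenSignedPermOrbit (n : ℕ) (lam mu : Fin n → ℝ) : Prop :=
  ∃ (g : Equiv.Perm (Fin n)) (e : Fin n → ℝ),
    (∀ i, e i = 1 ∨ e i = -1) ∧ (∏ i, e i) = 1 ∧ ∀ i, mu i = e i * lam (g i)

/-- σ = (n₁,...,n_k) is a dominant Spin(2k) weight: n₁ ≥ ... ≥ n_{k-1} ≥ |n_k|. -/
def domM (k : ℕ) (hk : 2 ≤ k) (σ : Fin k → ℝ) : Prop :=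
  (∀ i : Fin k, ∀ h : i.val + 2 < k, σ i ≥ σ ⟨i.val + 1, by omega⟩) ∧
  σ ⟨k - 2, by omega⟩ ≥ |σ ⟨k - 1, by omega⟩|

/-- The tuple (n₁+k-1, n₂+k-2, ..., n_{k-1}+1, n_k, ν) attached to (σ,ν). -/
noncomputable def tupD (k : ℕ) (σ : Fin k → ℝ) (ν : ℝ) : Fin (k + 1) → ℝ := fun i =>
  if h : i.val < k then σ ⟨i.val, h⟩ + (k : ℝ) - 1 - i.val else ν

/-- The k+2 pairs (σ_j, ν_j) of Theorem 3(ii): for j ≤ k (0-indexed j ≤ k-1),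
ν_j = λ_j and σ_j is obtained by deleting λ_j, shifting, and appending 0;
the last two pairs have ν = 0 and σ = (λ₁-k+1,...,λ_{k-1}-1, ±λ_k). -/
noncomputable def pairD (k : ℕ) (hk : 2 ≤ k) (lam : Fin (k + 1) → ℝ)
    (j : Fin (k + 2)) : (Fin k → ℝ) × ℝ :=
  if hj : j.val < k then
    (fun i =>
      if i.val = k - 1 then 0
      else if i.val < j.val then lam ⟨i.val, by omega⟩ - k + i.val + 1
      else lam ⟨i.val + 1, by have := i.isLt; omega⟩ - k + i.val + 1,
     lam ⟨j.val, by omega⟩)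
  else if j.val = k then
    (fun i =>
      if i.val = k - 1 then lam ⟨k - 1, by omega⟩
      else lam ⟨i.val, by omega⟩ - k + i.val + 1, 0)
  else
    (fun i =>
      if i.val = k - 1 then -lam ⟨k - 1, by omega⟩
      else lam ⟨i.val, by omega⟩ - k + i.val + 1, 0)


/-- extend a function on `Fin n` to `ℕ` by zero -/
private noncomputable def nf {n : ℕ} (f : Fin n → ℝ) : ℕ → ℝ :=
  fun i => if h : i < n then f ⟨i, h⟩ else 0

private theorem nf_eq {n : ℕ} (f : Fin n → ℝ) (i : ℕ) (h : i < n) :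
    f ⟨i, h⟩ = nf f i := by unfold nf; rw [dif_pos h]

private theorem nf_eq' {n : ℕ} (f : Fin n → ℝ) (i : Fin n) :
    f i = nf f i.val := by unfold nf; rw [dif_pos i.isLt]

private def permVal {n : ℕ} (g : Equiv.Perm (Fin n)) : ℕ → ℕ :=
  fun i => if h : i < n then (g ⟨i, h⟩).val else 0

private theorem permVal_eq {n : ℕ} (g : Equiv.Perm (Fin n)) (i : ℕ) (h : i < n) :
    permVal g i = (g ⟨i, h⟩).val := dif_pos h

private theorem auxAdd (f : ℕ → ℕ) (n : ℕ)
    (hmono : ∀ i, i + 1 < n → f i < f (i + 1)) :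
    ∀ m i, i + m < n → f i + m ≤ f (i + m) := by
  intro m
  induction m with
  | zero => intro i _; simp
  | succ m ih =>
    intro i h
    have h1 := ih i (by omega)
    have h2 := hmono (i + m) (by omega)
    rw [show i + (m + 1) = (i + m) + 1 by omega]
    omega

private theorem auxEnum (f : ℕ → ℕ) (n j : ℕ) (hj : j ≤ n) (hn : 0 < n)
    (hmono : ∀ i, i + 1 < n → f i < f (i + 1))
    (hub : ∀ i, i < n → f i ≤ n)
    (hmiss : ∀ i, i < n → f i ≠ j) :
    ∀ i, i < n → f i = if i < j then i else i + 1 := by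
  have hup : ∀ i, i < n → f i ≤ i + 1 := by
    intro i hi
    have h1 := auxAdd f n hmono (n - 1 - i) i (by omega)
    rw [show i + (n - 1 - i) = n - 1 by omega] at h1
    have h2 := hub (n - 1) (by omega)
    omega
  have hlow : ∀ i, i < n → i ≤ f i := by
    intro i hi
    have h1 := auxAdd f n hmono i 0 (by omega)
    simp only [Nat.zero_add] at h1
    omega
  intro i hi
  by_cases hij : i < j
  · rw [if_pos hij]
    by_contra hne
    have hfi : f i = i + 1 := by
      have := hup i hi; have := hlow i hi; omega
    have h1 := auxAdd f n hmono (j - 1 - i) i (by omega)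
    rw [show i + (j - 1 - i) = j - 1 by omega] at h1
    have h2 := hup (j - 1) (by omega)
    have h3 := hmiss (j - 1) (by omega)
    omega
  · rw [if_neg hij]
    have hjn : j < n := by omega
    have hfj : f j = j + 1 := by
      have := hup j hjn; have := hlow j hjn; have := hmiss j hjn; omega
    have h1 := auxAdd f n hmono (i - j) j (by omega)
    rw [show j + (i - j) = i by omega] at h1
    have h2 := hup i hi
    omega

private theorem finvalmk {n a : ℕ} (h : a < n) : (⟨a, h⟩ : Fin n).val = a := rfl

private theorem tupD_lt (k : ℕ) (S : Fin k → ℝ) (v : ℝ) (i : ℕ) (h : i < k) :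
    ∀ h2 : i < k + 1, tupD k S v ⟨i, h2⟩ = S ⟨i, h⟩ + k - 1 - i := fun _ => dif_pos h

private theorem tupD_ge (k : ℕ) (S : Fin k → ℝ) (v : ℝ) (i : ℕ) (h : ¬ i < k) :
    ∀ h2 : i < k + 1, tupD k S v ⟨i, h2⟩ = v := fun _ => dif_neg h

private theorem nf_tupD_lt (k : ℕ) (S : Fin k → ℝ) (v : ℝ) (i : ℕ) (h : i < k) :
    nf (tupD k S v) i = nf S i + k - 1 - i := by
  rw [← nf_eq (tupD k S v) i (by omega), ← nf_eq S i h]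
  exact dif_pos h

private theorem nf_tupD_last (k : ℕ) (S : Fin k → ℝ) (v : ℝ) :
    nf (tupD k S v) k = v := by
  rw [← nf_eq (tupD k S v) k (by omega)]
  exact dif_neg (lt_irrefl k)

/-- for λ ∈ Λ⁰ (λ₁ > ... > λ_k > 0 integers, λ_{k+1} = 0) there are
exactly k+2 pairs (σ,ν) with σ a dominant Spin(2k) weight with integer coordinates
and ν ≥ 0 such that (n₁+k-1,...,n_{k-1}+1,n_k,ν) lies in the
even-signed-permutation orbit of λ; they are the pairs pairD j, j = 1,...,k+2,
which are mutually distinct. -/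
theorem stmt14 (k : ℕ) (hk : 2 ≤ k) (lam : Fin (k + 1) → ℝ)
    (hdec : ∀ i : Fin (k + 1), ∀ h : i.val + 1 < k, lam i > lam ⟨i.val + 1, by omega⟩)
    (hpos : lam ⟨k - 1, by omega⟩ > 0)
    (hzero : lam ⟨k, by omega⟩ = 0)
    (hint : ∀ i, ∃ m : ℤ, lam i = m) :
    (∀ (σ : Fin k → ℝ) (ν : ℝ),
      (domM k hk σ ∧ (∀ i, ∃ m : ℤ, σ i = m) ∧ 0 ≤ ν ∧
        evenSignedPermOrbit (k + 1) lam (tupD k σ ν))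
      ↔ ∃ j : Fin (k + 2), (σ, ν) = pairD k hk lam j) ∧
    Function.Injective (pairD k hk lam) := by
  have hc1 : ((k - 1 : ℕ) : ℝ) = (k : ℝ) - 1 := by
    rw [Nat.cast_sub (by omega : 1 ≤ k)]; norm_num
  have hc2 : ((k - 2 : ℕ) : ℝ) = (k : ℝ) - 2 := by
    rw [Nat.cast_sub (by omega : 2 ≤ k)]; norm_num
  have hzero' : nf lam k = 0 := by
    rw [← nf_eq lam k (by omega)]; exact hzero
  have hpos' : 0 < nf lam (k - 1) := by
    rw [← nf_eq lam (k - 1) (by omega)]; exact hpos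
  have hLint : ∀ i : ℕ, ∃ m : ℤ, nf lam i = m := by
    intro i
    by_cases h : i < k + 1
    · obtain ⟨m, hm⟩ := hint ⟨i, h⟩
      rw [nf_eq lam i h] at hm
      exact ⟨m, hm⟩
    · exact ⟨0, by unfold nf; rw [dif_neg h]; norm_num⟩
  have hdec1 : ∀ i : ℕ, i + 1 ≤ k → nf lam (i + 1) + 1 ≤ nf lam i := by
    intro i h
    have hlt : nf lam (i + 1) < nf lam i := by
      rcases lt_or_eq_of_le h with h' | h'
      · have h0 : lam ⟨i, by omega⟩ > lam ⟨i + 1, by omega⟩ := hdec ⟨i, by omega⟩ h'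
        rw [nf_eq lam i (by omega), nf_eq lam (i + 1) (by omega)] at h0
        exact h0
      · have hi : i = k - 1 := by omega
        subst hi
        rw [show k - 1 + 1 = k by omega, hzero']
        exact hpos'
    obtain ⟨m, hm⟩ := hLint i
    obtain ⟨m', hm'⟩ := hLint (i + 1)
    rw [hm, hm'] at hlt ⊢
    have h1 : m' < m := by exact_mod_cast hlt
    have h2 : m' + 1 ≤ m := by omega
    exact_mod_cast h2
  have hgap : ∀ i d : ℕ, i + d ≤ k → nf lam (i + d) + d ≤ nf lam i := by
    intro i d
    induction d with
    | zero => intro _; simp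
    | succ d ih =>
      intro h
      have h1 := ih (by omega)
      have h2 := hdec1 (i + d) (by omega)
      rw [show i + (d + 1) = (i + d) + 1 by omega]
      push_cast
      push_cast at h1
      linarith
  have hanti : ∀ i i' : ℕ, i < i' → i' ≤ k → nf lam i' < nf lam i := by
    intro i i' h h'
    have h1 := hgap i (i' - i) (by omega)
    rw [show i + (i' - i) = i' by omega] at h1
    have h2 : (1 : ℝ) ≤ ((i' - i : ℕ) : ℝ) := by exact_mod_cast (by omega : 1 ≤ i' - i)
    linarith
  have hnn : ∀ i : ℕ, 0 ≤ nf lam i := by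
    intro i
    by_cases h : i < k + 1
    · rcases eq_or_lt_of_le (by omega : i ≤ k) with h' | h'
      · subst h'; rw [hzero']
      · have := hanti i k h' (le_refl k); rw [hzero'] at this; linarith
    · unfold nf; rw [dif_neg h]
  have hvlt : ∀ a b : ℕ, a ≤ k → b ≤ k → nf lam b < nf lam a → a < b := by
    intro a b ha hb hab
    by_contra hle
    push_neg at hle
    rcases eq_or_lt_of_le hle with h' | h'
    · subst h'; exact lt_irrefl _ hab
    · have := hanti b a h' ha; linarith
  -- characterizations of pairD
  have hσvP : ∀ j : Fin (k + 2), j.val < k → ∀ (i : ℕ) (h : i < k),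
      (pairD k hk lam j).1 ⟨i, h⟩ =
        if i = k - 1 then 0
        else if i < j.val then nf lam i - k + i + 1
        else nf lam (i + 1) - k + i + 1 := by
    intro j hj i h
    simp only [pairD, dif_pos hj]
    show (if i = k - 1 then (0:ℝ)
        else if i < j.val then lam ⟨i, by omega⟩ - k + i + 1
        else lam ⟨i + 1, by omega⟩ - k + i + 1) = _
    rw [nf_eq lam i (by omega), nf_eq lam (i + 1) (by omega)]
  have hνvP : ∀ j : Fin (k + 2), j.val < k → (pairD k hk lam j).2 = nf lam j.val := by
    intro j hj
    simp only [pairD, dif_pos hj]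
    exact nf_eq lam j.val (by omega)
  have hσvK : ∀ j : Fin (k + 2), j.val = k → ∀ (i : ℕ) (h : i < k),
      (pairD k hk lam j).1 ⟨i, h⟩ =
        if i = k - 1 then nf lam (k - 1) else nf lam i - k + i + 1 := by
    intro j hj i h
    simp only [pairD, dif_neg (by omega : ¬ j.val < k), if_pos hj]
    show (if i = k - 1 then lam ⟨k - 1, by omega⟩
        else lam ⟨i, by omega⟩ - k + i + 1) = _
    rw [nf_eq lam (k - 1) (by omega), nf_eq lam i (by omega)]
  have hσvK1 : ∀ j : Fin (k + 2), ¬ j.val < k → j.val ≠ k → ∀ (i : ℕ) (h : i < k),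
      (pairD k hk lam j).1 ⟨i, h⟩ =
        if i = k - 1 then -nf lam (k - 1) else nf lam i - k + i + 1 := by
    intro j hj hj2 i h
    simp only [pairD, dif_neg hj, if_neg hj2]
    show (if i = k - 1 then -lam ⟨k - 1, by omega⟩
        else lam ⟨i, by omega⟩ - k + i + 1) = _
    rw [nf_eq lam (k - 1) (by omega), nf_eq lam i (by omega)]
  have hνvK : ∀ j : Fin (k + 2), ¬ j.val < k → (pairD k hk lam j).2 = 0 := by
    intro j hj
    by_cases hj2 : j.val = k
    · simp only [pairD, dif_neg hj, if_pos hj2]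
    · simp only [pairD, dif_neg hj, if_neg hj2]
  constructor
  · intro σ ν
    constructor
    · rintro ⟨⟨hdom1, hdom2⟩, hσint, hν, g, e, he, hprod, hmu⟩
      have hS2 : |nf σ (k - 1)| ≤ nf σ (k - 2) := by
        have h0 : σ ⟨k - 2, by omega⟩ ≥ |σ ⟨k - 1, by omega⟩| := hdom2
        rw [nf_eq σ (k - 2), nf_eq σ (k - 1)] at h0
        exact h0
      have hSdec : ∀ i : ℕ, i + 2 ≤ k → nf σ (i + 1) ≤ nf σ i := by
        intro i h
        rcases lt_or_eq_of_le h with h' | h'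
        · have h0 : σ ⟨i, by omega⟩ ≥ σ ⟨i + 1, by omega⟩ := hdom1 ⟨i, by omega⟩ h'
          rw [nf_eq σ i (by omega), nf_eq σ (i + 1) (by omega)] at h0
          exact h0
        · have hi : i = k - 2 := by omega
          subst hi
          rw [show k - 2 + 1 = k - 1 by omega]
          exact le_trans (le_abs_self _) hS2
      have hSchain : ∀ i d : ℕ, i + d + 1 ≤ k → nf σ (i + d) ≤ nf σ i := by
        intro i d
        induction d with
        | zero => intro _; simp
        | succ d ih =>
          intro h
          have h1 := ih (by omega)
          have h2 := hSdec (i + d) (by omega)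
          rw [show i + (d + 1) = i + d + 1 by omega]
          linarith
      have hSnn : ∀ i : ℕ, i + 2 ≤ k → 0 ≤ nf σ i := by
        intro i h
        have h1 := hSchain i (k - 2 - i) (by omega)
        rw [show i + (k - 2 - i) = k - 2 by omega] at h1
        have h2 := abs_nonneg (nf σ (k - 1))
        linarith [hS2]
      have hTnn : ∀ i : ℕ, i + 2 ≤ k → 1 ≤ nf (tupD k σ ν) i := by
        intro i h
        rw [nf_tupD_lt k σ ν i (by omega)]
        have h1 := hSnn i h
        have h2 : (i : ℝ) ≤ (k : ℝ) - 2 := by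
          rw [← hc2]; exact_mod_cast (by omega : i ≤ k - 2)
        linarith
      have habs' : ∀ i : ℕ, i < k + 1 → |nf (tupD k σ ν) i| = nf lam (permVal g i) := by
        intro i h
        have h0 : tupD k σ ν ⟨i, h⟩ = e ⟨i, h⟩ * lam (g ⟨i, h⟩) := hmu ⟨i, h⟩
        rw [nf_eq (tupD k σ ν) i h, nf_eq' lam (g ⟨i, h⟩)] at h0
        rw [permVal_eq g i h, h0, abs_mul]
        rcases he ⟨i, h⟩ with h1 | h1 <;> rw [h1] <;>
          simp [abs_of_nonneg (hnn _)]
      have hTabsdec : ∀ i : ℕ, i + 2 ≤ k →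
          |nf (tupD k σ ν) (i + 1)| < |nf (tupD k σ ν) i| := by
        intro i h
        have hTi := hTnn i h
        rw [abs_of_nonneg (by linarith : (0:ℝ) ≤ nf (tupD k σ ν) i)]
        rcases lt_or_eq_of_le h with h' | h'
        · have hT1 := hTnn (i + 1) (by omega)
          rw [abs_of_nonneg (by linarith : (0:ℝ) ≤ nf (tupD k σ ν) (i + 1))]
          rw [nf_tupD_lt k σ ν i (by omega), nf_tupD_lt k σ ν (i + 1) (by omega)]
          have := hSdec i (by omega)
          push_cast
          linarith
        · have hie : i = k - 2 := by omega
          subst hie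
          rw [show k - 2 + 1 = k - 1 by omega]
          rw [nf_tupD_lt k σ ν (k - 1) (by omega), nf_tupD_lt k σ ν (k - 2) (by omega)]
          rw [hc1, hc2]
          rw [show nf σ (k - 1) + (k:ℝ) - 1 - ((k:ℝ) - 1) = nf σ (k - 1) by ring]
          rcases abs_le.mp hS2 with ⟨hl, hr⟩
          rw [abs_lt]
          constructor <;> linarith
      set jv := permVal g k with hjvdef
      have hjvle : jv ≤ k := by
        rw [hjvdef, permVal_eq g k (by omega)]
        exact Nat.lt_succ_iff.mp (g ⟨k, by omega⟩).isLt
      have hpub : ∀ i : ℕ, i < k → permVal g i ≤ k := by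
        intro i h
        rw [permVal_eq g i (by omega)]
        exact Nat.lt_succ_iff.mp (g ⟨i, by omega⟩).isLt
      have hpmono : ∀ i : ℕ, i + 1 < k → permVal g i < permVal g (i + 1) := by
        intro i h
        have a1 := habs' i (by omega)
        have a2 := habs' (i + 1) (by omega)
        have a3 := hTabsdec i (by omega)
        rw [a1, a2] at a3
        exact hvlt _ _ (hpub i (by omega)) (hpub (i + 1) (by omega)) a3
      have hmiss : ∀ i : ℕ, i < k → permVal g i ≠ jv := by
        intro i h heq
        rw [hjvdef, permVal_eq g i (by omega), permVal_eq g k (by omega)] at heq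
        have h2 := g.injective (Fin.ext heq)
        have h3 : i = k := congrArg Fin.val h2
        omega
      have henum := auxEnum (permVal g) k jv hjvle (by omega) hpmono hpub hmiss
      have hνval : ν = nf lam jv := by
        have a1 := habs' k (by omega)
        rw [nf_tupD_last, abs_of_nonneg hν] at a1
        exact a1
      have hlow : ∀ i : ℕ, i + 2 ≤ k → nf σ i = nf lam (permVal g i) - k + i + 1 := by
        intro i h
        have a1 := habs' i (by omega)
        rw [abs_of_nonneg (by linarith [hTnn i h] : (0:ℝ) ≤ nf (tupD k σ ν) i),
          nf_tupD_lt k σ ν i (by omega)] at a1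
        linarith
      have hk1abs : |nf σ (k - 1)| = nf lam (permVal g (k - 1)) := by
        have a1 := habs' (k - 1) (by omega)
        rw [nf_tupD_lt k σ ν (k - 1) (by omega), hc1] at a1
        rw [show nf σ (k - 1) + (k:ℝ) - 1 - ((k:ℝ) - 1) = nf σ (k - 1) by ring] at a1
        exact a1
      by_cases hjvk : jv < k
      · obtain ⟨J, hJprop⟩ : ∃ J : Fin (k + 2), J.val = jv := ⟨⟨jv, by omega⟩, rfl⟩
        refine ⟨J, ?_⟩
        rw [Prod.ext_iff]
        constructor
        · funext i
          rcases i with ⟨i, hik⟩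
          show σ ⟨i, hik⟩ = _
          rw [nf_eq σ i hik, hσvP J (by omega) i hik, hJprop]
          by_cases hie : i = k - 1
          · rw [if_pos hie]
            have hp := henum (k - 1) (by omega)
            rw [if_neg (by omega : ¬ k - 1 < jv), show k - 1 + 1 = k by omega] at hp
            have h5 := hk1abs
            rw [hp, hzero'] at h5
            rw [hie]
            exact abs_eq_zero.mp h5
          · by_cases hlt2 : i < jv
            · rw [if_neg hie, if_pos hlt2]
              have hp := henum i (by omega)
              rw [if_pos hlt2] at hp
              have h5 := hlow i (by omega)
              rw [hp] at h5
              exact h5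
            · rw [if_neg hie, if_neg hlt2]
              have hp := henum i (by omega)
              rw [if_neg hlt2] at hp
              have h5 := hlow i (by omega)
              rw [hp] at h5
              exact h5
        · show ν = _
          rw [hνvP J (by omega), hJprop]
          exact hνval
      · have hjve : jv = k := by omega
        have hpid : ∀ i : ℕ, i < k → permVal g i = i := by
          intro i h
          have hp := henum i h
          rw [if_pos (by omega : i < jv)] at hp
          exact hp
        have hνz : ν = 0 := by rw [hνval, hjve, hzero']
        have hk1 : |nf σ (k - 1)| = nf lam (k - 1) := by
          rw [hk1abs, hpid (k - 1) (by omega)]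
        rcases (abs_eq (hnn (k - 1))).mp hk1 with hcase | hcase
        · obtain ⟨J, hJprop⟩ : ∃ J : Fin (k + 2), J.val = k := ⟨⟨k, by omega⟩, rfl⟩
          refine ⟨J, ?_⟩
          rw [Prod.ext_iff]
          constructor
          · funext i
            rcases i with ⟨i, hik⟩
            show σ ⟨i, hik⟩ = _
            rw [nf_eq σ i hik, hσvK J hJprop i hik]
            by_cases hie : i = k - 1
            · rw [if_pos hie, hie]
              exact hcase
            · rw [if_neg hie]
              have h5 := hlow i (by omega)
              rw [hpid i (by omega)] at h5
              exact h5
          · show ν = _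
            rw [hνvK J (by omega)]
            exact hνz
        · obtain ⟨J, hJprop⟩ : ∃ J : Fin (k + 2), J.val = k + 1 := ⟨⟨k + 1, by omega⟩, rfl⟩
          refine ⟨J, ?_⟩
          rw [Prod.ext_iff]
          constructor
          · funext i
            rcases i with ⟨i, hik⟩
            show σ ⟨i, hik⟩ = _
            rw [nf_eq σ i hik, hσvK1 J (by omega) (by omega) i hik]
            by_cases hie : i = k - 1
            · rw [if_pos hie, hie]
              exact hcase
            · rw [if_neg hie]
              have h5 := hlow i (by omega)
              rw [hpid i (by omega)] at h5
              exact h5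
          · show ν = _
            rw [hνvK J (by omega)]
            exact hνz
    · rintro ⟨j, hj⟩
      have hσ : σ = (pairD k hk lam j).1 := congrArg Prod.fst hj
      have hν : ν = (pairD k hk lam j).2 := congrArg Prod.snd hj
      subst hσ
      subst hν
      by_cases hjk : j.val < k
      · refine ⟨⟨?_, ?_⟩, ?_, ?_, ?_⟩
        · -- monotone part of domM
          intro i hcond
          rcases i with ⟨i, hik⟩
          have hcond2 : i + 2 < k := hcond
          simp only [finvalmk]
          rw [hσvP j hjk i, hσvP j hjk (i + 1)]
          have g1 := hgap i 1 (by omega)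
          have g2 : nf lam (i + 1 + 1) + ((2:ℕ):ℝ) ≤ nf lam i := by
            rw [show i + 1 + 1 = i + 2 by omega]; exact hgap i 2 (by omega)
          have g3 := hgap (i + 1) 1 (by omega)
          push_cast at g1 g2 g3
          split_ifs <;> first
            | (exfalso; omega)
            | (push_cast; linarith)
        · -- last coordinate part of domM
          rw [hσvP j hjk (k - 2), hσvP j hjk (k - 1), if_pos rfl,
            if_neg (by omega : ¬ k - 2 = k - 1)]
          rw [show k - 2 + 1 = k - 1 by omega]
          have g1 := hgap (k - 2) 2 (by omega)
          have g2 := hgap (k - 1) 1 (by omega)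
          rw [show k - 2 + 2 = k by omega, hzero'] at g1
          rw [show k - 1 + 1 = k by omega, hzero'] at g2
          push_cast at g1 g2
          split_ifs <;> (rw [abs_zero, hc2]; linarith)
        · -- integrality
          rintro ⟨i, hik⟩
          rw [hσvP j hjk i]
          obtain ⟨m, hm⟩ := hLint i
          obtain ⟨m', hm'⟩ := hLint (i + 1)
          split_ifs
          · exact ⟨0, by norm_num⟩
          · exact ⟨m - k + i + 1, by rw [hm]; push_cast; ring⟩
          · exact ⟨m' - k + i + 1, by rw [hm']; push_cast; ring⟩
        · rw [hνvP j hjk]; exact hnn _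
        · -- orbit membership
          refine ⟨Equiv.ofBijective (fun i : Fin (k + 1) =>
            (⟨if i.val < j.val then i.val else if i.val < k - 1 then i.val + 1
              else if i.val = k - 1 then k else j.val, by split_ifs <;> omega⟩ : Fin (k + 1)))
            (Finite.injective_iff_bijective.mp ?_), fun _ => 1, fun _ => Or.inl rfl,
            Finset.prod_const_one, ?_⟩
          · rintro ⟨a, ha⟩ ⟨b, hb⟩ hab
            have hab' : (if a < j.val then a else if a < k - 1 then a + 1
                else if a = k - 1 then k else j.val) =
                (if b < j.val then b else if b < k - 1 then b + 1
                else if b = k - 1 then k else j.val) := congrArg Fin.val hab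
            apply Fin.ext
            show a = b
            split_ifs at hab' <;> omega
          · rintro ⟨i, hi⟩
            rw [Equiv.ofBijective_apply, one_mul]
            by_cases hik : i < k
            · rw [tupD_lt k _ _ i hik, hσvP j hjk i]
              by_cases h1 : i < j.val
              · rw [if_neg (by omega : ¬ i = k - 1), if_pos h1]
                have hval : (if i < j.val then i else if i < k - 1 then i + 1
                    else if i = k - 1 then k else j.val) = i := by split_ifs <;> omega
                rw [nf_eq lam]
                simp only [finvalmk]
                rw [hval]
                ring
              · by_cases h2 : i < k - 1
                · rw [if_neg (by omega : ¬ i = k - 1), if_neg h1]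
                  have hval : (if i < j.val then i else if i < k - 1 then i + 1
                      else if i = k - 1 then k else j.val) = i + 1 := by split_ifs <;> omega
                  rw [nf_eq lam]
                  simp only [finvalmk]
                  rw [hval]
                  ring
                · have hie : i = k - 1 := by omega
                  rw [if_pos hie]
                  have hval : (if i < j.val then i else if i < k - 1 then i + 1
                      else if i = k - 1 then k else j.val) = k := by split_ifs <;> omega
                  rw [nf_eq lam]
                  simp only [finvalmk]
                  rw [hval, hzero', show (i:ℝ) = (k:ℝ) - 1 by rw [← hc1]; exact_mod_cast hie]
                  ring
            · rw [tupD_ge k _ _ i hik, hνvP j hjk]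
              have hval : (if i < j.val then i else if i < k - 1 then i + 1
                  else if i = k - 1 then k else j.val) = j.val := by split_ifs <;> omega
              rw [nf_eq lam]
              simp only [finvalmk]
              rw [hval]
      · by_cases hjk2 : j.val = k
        · refine ⟨⟨?_, ?_⟩, ?_, ?_, ?_⟩
          · intro i hcond
            rcases i with ⟨i, hik⟩
            have hcond2 : i + 2 < k := hcond
            simp only [finvalmk]
            rw [hσvK j hjk2 i, hσvK j hjk2 (i + 1),
              if_neg (by omega : ¬ i = k - 1), if_neg (by omega : ¬ i + 1 = k - 1)]
            have g1 := hgap i 1 (by omega)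
            push_cast at g1
            push_cast
            linarith
          · rw [hσvK j hjk2 (k - 2), hσvK j hjk2 (k - 1), if_pos rfl,
              if_neg (by omega : ¬ k - 2 = k - 1)]
            rw [abs_of_nonneg (hnn _)]
            have g1 := hgap (k - 2) 1 (by omega)
            rw [show k - 2 + 1 = k - 1 by omega] at g1
            push_cast at g1
            rw [hc2]
            linarith
          · rintro ⟨i, hik⟩
            rw [hσvK j hjk2 i]
            obtain ⟨m, hm⟩ := hLint i
            obtain ⟨m', hm'⟩ := hLint (k - 1)
            split_ifs
            · exact ⟨m', hm'⟩
            · exact ⟨m - k + i + 1, by rw [hm]; push_cast; ring⟩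
          · rw [hνvK j hjk]
          · refine ⟨Equiv.refl _, fun _ => 1, fun _ => Or.inl rfl,
              Finset.prod_const_one, ?_⟩
            rintro ⟨i, hi⟩
            simp only [Equiv.refl_apply, one_mul]
            by_cases hik : i < k
            · rw [tupD_lt k _ _ i hik, hσvK j hjk2 i, nf_eq lam i hi]
              by_cases hie : i = k - 1
              · subst hie
                rw [if_pos rfl, hc1]
                ring
              · rw [if_neg hie]
                ring
            · rw [tupD_ge k _ _ i hik, hνvK j hjk, nf_eq lam i,
                show i = k by omega, hzero']
        · refine ⟨⟨?_, ?_⟩, ?_, ?_, ?_⟩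
          · intro i hcond
            rcases i with ⟨i, hik⟩
            have hcond2 : i + 2 < k := hcond
            simp only [finvalmk]
            rw [hσvK1 j hjk hjk2 i, hσvK1 j hjk hjk2 (i + 1),
              if_neg (by omega : ¬ i = k - 1), if_neg (by omega : ¬ i + 1 = k - 1)]
            have g1 := hgap i 1 (by omega)
            push_cast at g1
            push_cast
            linarith
          · rw [hσvK1 j hjk hjk2 (k - 2), hσvK1 j hjk hjk2 (k - 1), if_pos rfl,
              if_neg (by omega : ¬ k - 2 = k - 1)]
            rw [abs_neg, abs_of_nonneg (hnn _)]
            have g1 := hgap (k - 2) 1 (by omega)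
            rw [show k - 2 + 1 = k - 1 by omega] at g1
            push_cast at g1
            rw [hc2]
            linarith
          · rintro ⟨i, hik⟩
            rw [hσvK1 j hjk hjk2 i]
            obtain ⟨m, hm⟩ := hLint i
            obtain ⟨m', hm'⟩ := hLint (k - 1)
            split_ifs
            · exact ⟨-m', by rw [hm']; push_cast; ring⟩
            · exact ⟨m - k + i + 1, by rw [hm]; push_cast; ring⟩
          · rw [hνvK j hjk]
          · refine ⟨Equiv.refl _,
              fun i => (if i = (⟨k - 1, by omega⟩ : Fin (k + 1)) then (-1 : ℝ) else 1) *
                (if i = (⟨k, by omega⟩ : Fin (k + 1)) then (-1 : ℝ) else 1), ?_, ?_, ?_⟩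
            · intro i; dsimp only; split_ifs <;> norm_num
            · dsimp only
              rw [Finset.prod_mul_distrib, Finset.prod_ite_eq' Finset.univ,
                Finset.prod_ite_eq' Finset.univ]
              simp
            · rintro ⟨i, hi⟩
              simp only [Equiv.refl_apply]
              by_cases hik : i < k
              · rw [tupD_lt k _ _ i hik, hσvK1 j hjk hjk2 i, nf_eq lam i hi]
                have hne2 : (⟨i, hi⟩ : Fin (k + 1)) ≠ ⟨k, by omega⟩ := by
                  intro hcc
                  have hcc2 : i = k := congrArg Fin.val hcc
                  omega
                by_cases hie : i = k - 1
                · rw [if_pos hie, if_pos (by apply Fin.ext; show i = k - 1; omega), if_neg hne2]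
                  rw [show (i:ℝ) = (k:ℝ) - 1 by rw [← hc1]; exact_mod_cast hie, hie]
                  ring
                · have hne1 : (⟨i, hi⟩ : Fin (k + 1)) ≠ ⟨k - 1, by omega⟩ := by
                    intro hcc
                    have hcc2 : i = k - 1 := congrArg Fin.val hcc
                    omega
                  rw [if_neg hie, if_neg hne1, if_neg hne2]
                  ring
              · rw [tupD_ge k _ _ i hik, hνvK j hjk]
                rw [if_neg (by intro hcc; have hcc2 : i = k - 1 := congrArg Fin.val hcc; omega),
                  if_pos (by apply Fin.ext; show i = k; omega)]
                rw [nf_eq lam i, show i = k by omega, hzero']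
                ring
  · -- injectivity
    intro a b hab
    have h2 : (pairD k hk lam a).2 = (pairD k hk lam b).2 := congrArg Prod.snd hab
    have h1 : (pairD k hk lam a).1 ⟨k - 1, by omega⟩ = (pairD k hk lam b).1 ⟨k - 1, by omega⟩ :=
      congrArg (fun p : (Fin k → ℝ) × ℝ => p.1 ⟨k - 1, by omega⟩) hab
    have hal := a.isLt
    have hbl := b.isLt
    apply Fin.ext
    by_cases hak : a.val < k <;> by_cases hbk : b.val < k
    · rw [hνvP a hak, hνvP b hbk] at h2
      by_contra hne
      rcases Nat.lt_or_ge a.val b.val with h | h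
      · have := hanti a.val b.val h (by omega); linarith
      · have := hanti b.val a.val (by omega) (by omega); linarith
    · exfalso
      rw [hνvP a hak, hνvK b hbk] at h2
      have := hanti a.val k hak (le_refl k)
      rw [hzero'] at this; linarith
    · exfalso
      rw [hνvK a hak, hνvP b hbk] at h2
      have := hanti b.val k hbk (le_refl k)
      rw [hzero'] at this; linarith
    · by_cases hae : a.val = k <;> by_cases hbe : b.val = k
      · omega
      · exfalso
        rw [hσvK a hae (k - 1), hσvK1 b hbk hbe (k - 1), if_pos rfl, if_pos rfl] at h1
        linarith
      · exfalso
        rw [hσvK1 a hak hae (k - 1), hσvK b hbe (k - 1), if_pos rfl, if_pos rfl] at h1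
        linarith
      · omega
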